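/- arXiv:2209.07236 — 4 statements merged into one kernel-verified Lean document; each statement's English description precedes it below -/
import Mathlib

section
/- For the signed Laplacian L = D - A with absolute-value degrees, if there exists a diagonal signature matrix C = diag(σ_1,...,σ_n) with σ_i ∈ {±1} such that CAC has all nonnegative entries, then zero is an eigenvalue of L. -/
/-- If there is a signature matrix `C = diagonal σ` (σ i = ±1)
such that `C * A * C` has all nonnegative entries, then zero is an eigenvalue
of the signed Laplacian `L = D - A` with absolute-value degrees. -/
theorem zero_eigenvalue_of_structural_balance {n : ℕ} (hn : 0 < n)
    (A : Matrix (Fin n) (Fin n) ℝ) (hsymm : A.IsSymm) (hdiag : ∀ i, A i i = 0)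
    (σ : Fin n → ℝ) (hσ : ∀ i, σ i = 1 ∨ σ i = -1)
    (hnn : ∀ i j, 0 ≤ (Matrix.diagonal σ * A * Matrix.diagonal σ) i j) :
    ∃ v : Fin n → ℝ, v ≠ 0 ∧
      (Matrix.diagonal (fun i => ∑ j, |A i j|) - A).mulVec v = 0 := by
  have hσsq : ∀ i, σ i * σ i = 1 := by
    intro i; rcases hσ i with h | h <;> rw [h] <;> norm_num
  have hσne : ∀ i, σ i ≠ 0 := by
    intro i; rcases hσ i with h | h <;> rw [h] <;> norm_num
  have key : ∀ i j, A i j * σ j = σ i * |A i j| := by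
    intro i j
    have h1 : 0 ≤ σ i * A i j * σ j := by
      have := hnn i j
      simpa [Matrix.diagonal_mul, Matrix.mul_diagonal, mul_comm, mul_assoc,
        mul_left_comm] using this
    have habs : |σ i * A i j * σ j| = |A i j| := by
      rw [abs_mul, abs_mul]
      rcases hσ i with h | h <;> rcases hσ j with h' | h' <;>
        simp [h, h', abs_of_nonneg, abs_of_nonpos]
    have h2 : σ i * A i j * σ j = |A i j| := by
      rw [← habs, abs_of_nonneg h1]
    have := congrArg (fun x => σ i * x) h2
    calc A i j * σ j = σ i * σ i * A i j * σ j := by rw [hσsq]; ring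
      _ = σ i * (σ i * A i j * σ j) := by ring
      _ = σ i * |A i j| := by rw [h2]
  refine ⟨σ, ?_, ?_⟩
  · intro h
    exact hσne ⟨0, hn⟩ (congrFun h ⟨0, hn⟩)
  · funext i
    simp only [Matrix.mulVec, dotProduct, Matrix.sub_apply,
      Matrix.diagonal_apply, Pi.zero_apply, sub_mul, ite_mul, zero_mul,
      Finset.sum_sub_distrib, Finset.sum_ite_eq, Finset.mem_univ, if_true]
    rw [show ∑ j, A i j * σ j = ∑ j, σ i * |A i j| from
      Finset.sum_congr rfl (fun j _ => key i j)]
    rw [← Finset.mul_sum]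
    ring
end

section
/- Let L* be the Laplacian (with signed degrees) of a connected undirected weighted graph on n ≥ 3 vertices in which vertex 1 is connected to every other vertex with the same weight α ≠ 0, and the subgraph on vertices 2,...,n has a Laplacian L_f for which the all-ones vector 1_{n-1} is an eigenvector. Then with single input B = e_1, the dimension of the controllable subspace of (-L*, e_1), i.e., rank of [e_1, -L*e_1, ..., (-L*)^{n-1}e_1], equals 2. -/
open Matrix

/-- Kalman matrix over an arbitrary fintype index. -/
def kalman' {ι : Type*} [Fintype ι] [DecidableEq ι] {m : ℕ}
    (M : Matrix ι ι ℝ) (B : Matrix ι (Fin m) ℝ) :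
    Matrix ι (Fin (Fintype.card ι) × Fin m) ℝ :=
  Matrix.of fun i p => (M ^ (p.1 : ℕ) * B) i p.2

/-!
Let `u = e₁` and let `w` be the indicator vector of the followers. The plane `span {u, w}` is
invariant under `L*`: `L* u = α m • u + α • w`, and `L* w = α m • u + μ • w` because `1` is an
eigenvector of `L_f`. So every Krylov vector `(-L*)ᵏ e₁` lies in that plane, and since `α ≠ 0` the
first two of them already span it.
-/

open Module Submodule

section Krylov

variable {ι : Type*} [Fintype ι] [DecidableEq ι]

theorem range_col_kalman'_replicateCol (M : Matrix ι ι ℝ) (b : ι → ℝ) :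
    Set.range (kalman' M (replicateCol (Fin 1) b)).col =
      Set.range fun k : Fin (Fintype.card ι) => (M ^ (k : ℕ)) *ᵥ b := by
  ext v
  constructor
  · rintro ⟨⟨k, j⟩, rfl⟩
    exact ⟨k, by ext i; simp [kalman', ← replicateCol_mulVec, replicateCol_apply]⟩
  · rintro ⟨k, rfl⟩
    exact ⟨(k, 0), by ext i; simp [kalman', ← replicateCol_mulVec, replicateCol_apply]⟩

theorem pow_mulVec_mem_of_le_comap {R : Type*} [CommSemiring R] {M : Matrix ι ι R}
    {W : Submodule R (ι → R)} (hW : W ≤ W.comap M.mulVecLin) {b : ι → R} (hb : b ∈ W)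
    (k : ℕ) : (M ^ k) *ᵥ b ∈ W := by
  induction k with
  | zero => simpa using hb
  | succ k ih => simpa [pow_succ', ← mulVec_mulVec] using hW ih

theorem span_pow_mulVec_eq_span_pair {K : Type*} [Field K] {M : Matrix ι ι K} {u w : ι → K}
    {a b c d : K} (hc : c ≠ 0) (hu : M *ᵥ u = a • u + c • w)
    (hw : M *ᵥ w = b • u + d • w) {N : ℕ} (hN : 2 ≤ N) :
    span K (Set.range fun k : Fin N => (M ^ (k : ℕ)) *ᵥ u) = span K (Set.range ![u, w]) := by
  set W := span K (Set.range ![u, w])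
  have hu_mem : u ∈ W := subset_span ⟨0, rfl⟩
  have hw_mem : w ∈ W := subset_span ⟨1, rfl⟩
  apply le_antisymm
  · have hW : W ≤ W.comap M.mulVecLin := by
      rw [span_le, Set.range_subset_iff, Fin.forall_fin_two]
      constructor
      · simpa [hu] using add_mem (smul_mem W a hu_mem) (smul_mem W c hw_mem)
      · simpa [hw] using add_mem (smul_mem W b hu_mem) (smul_mem W d hw_mem)
    rw [span_le, Set.range_subset_iff]
    exact fun k => pow_mulVec_mem_of_le_comap hW hu_mem k
  · set V := span K (Set.range fun k : Fin N => (M ^ (k : ℕ)) *ᵥ u)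
    have krylov_mem (k : Fin N) : (M ^ (k : ℕ)) *ᵥ u ∈ V := subset_span ⟨k, rfl⟩
    have hu_V : u ∈ V := by simpa using krylov_mem ⟨0, by omega⟩
    have hMu_V : M *ᵥ u ∈ V := by simpa using krylov_mem ⟨1, hN⟩
    have hw_V : w ∈ V := by
      have : w = c⁻¹ • (M *ᵥ u - a • u) := by rw [hu, add_sub_cancel_left, inv_smul_smul₀ hc]
      rw [this]
      exact smul_mem V _ (sub_mem hMu_V (smul_mem V a hu_V))
    rw [span_le, Set.range_subset_iff, Fin.forall_fin_two]
    exact ⟨hu_V, hw_V⟩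

theorem rank_kalman'_replicateCol_eq_two {M : Matrix ι ι ℝ} {u w : ι → ℝ} {a b c d : ℝ}
    (hc : c ≠ 0) (hu : M *ᵥ u = a • u + c • w) (hw : M *ᵥ w = b • u + d • w)
    (hli : LinearIndependent ℝ ![u, w]) : (kalman' M (replicateCol (Fin 1) u)).rank = 2 := by
  have hcard : 2 ≤ Fintype.card ι := by
    simpa using hli.fintype_card_le_finrank
  rw [rank_eq_finrank_span_cols, range_col_kalman'_replicateCol,
    span_pow_mulVec_eq_span_pair hc hu hw hcard, finrank_span_eq_card hli, Fintype.card_fin]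

end Krylov

theorem linearIndependent_sumElim_one_zero {R l n : Type*} [Ring R] [Nonempty l] [Nonempty n] :
    LinearIndependent R ![Sum.elim (1 : l → R) 0, Sum.elim (0 : l → R) (1 : n → R)] := by
  rw [LinearIndependent.pair_iff]
  intro s t hst
  have h_inl := congrFun hst (Sum.inl (Classical.arbitrary l))
  have h_inr := congrFun hst (Sum.inr (Classical.arbitrary n))
  simp only [Pi.add_apply, Pi.smul_apply, Sum.elim_inl, Sum.elim_inr, Pi.one_apply,
    Pi.zero_apply, smul_eq_mul, mul_one, mul_zero, add_zero, zero_add] at h_inl h_inr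
  exact ⟨h_inl, h_inr⟩

section TStar

variable {m : ℕ} (α : ℝ) (Lf : Matrix (Fin m) (Fin m) ℝ)

def tstarLaplacian : Matrix (Unit ⊕ Fin m) (Unit ⊕ Fin m) ℝ :=
  fromBlocks (of fun _ _ => α * m) (of fun _ _ => α) (of fun _ _ => α) Lf

theorem tstarLaplacian_mulVec_leader :
    tstarLaplacian α Lf *ᵥ Sum.elim 1 0 =
      (α * m) • Sum.elim (1 : Unit → ℝ) 0 + α • Sum.elim (0 : Unit → ℝ) (1 : Fin m → ℝ) := by
  ext (_ | _) <;> simp [tstarLaplacian, mulVec, dotProduct]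

theorem tstarLaplacian_mulVec_followers {μ : ℝ} (hone : Lf *ᵥ 1 = μ • 1) :
    tstarLaplacian α Lf *ᵥ Sum.elim 0 1 =
      (α * m) • Sum.elim (1 : Unit → ℝ) 0 + μ • Sum.elim (0 : Unit → ℝ) (1 : Fin m → ℝ) := by
  ext (_ | i)
  · simp [tstarLaplacian, mulVec, dotProduct, mul_comm]
  · simpa [tstarLaplacian, fromBlocks_mulVec] using congrFun hone i

end TStar

theorem tstar_controllable_subspace_dim_two_general {m : ℕ} (hm : 2 ≤ m)
    (α μ : ℝ) (hα : α ≠ 0)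
    (Lf : Matrix (Fin m) (Fin m) ℝ)
    (hone : Lf.mulVec (fun _ => (1 : ℝ)) = μ • (fun _ => (1 : ℝ))) :
    letI L : Matrix (Unit ⊕ Fin m) (Unit ⊕ Fin m) ℝ :=
      Matrix.fromBlocks (Matrix.of fun _ _ => α * m) (Matrix.of fun _ _ => α)
        (Matrix.of fun _ _ => α) Lf
    letI e₁ : Matrix (Unit ⊕ Fin m) (Fin 1) ℝ :=
      Matrix.of fun i _ => if i = Sum.inl () then 1 else 0
    (kalman' (-L) e₁).rank = 2 := by
  have : Nonempty (Fin m) := ⟨⟨0, by omega⟩⟩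
  have he₁ : (of fun i _ => if i = Sum.inl () then 1 else 0 : Matrix (Unit ⊕ Fin m) (Fin 1) ℝ) =
      replicateCol (Fin 1) (Sum.elim 1 0) := by
    ext (_ | _) _ <;> simp [replicateCol_apply]
  change (kalman' (-tstarLaplacian α Lf) _).rank = 2
  rw [he₁]
  refine rank_kalman'_replicateCol_eq_two (a := -(α * m)) (b := -(α * m)) (c := -α) (d := -μ)
    (neg_ne_zero.2 hα) ?_ ?_ linearIndependent_sumElim_one_zero
  · rw [neg_mulVec, tstarLaplacian_mulVec_leader]; module
  · rw [neg_mulVec, tstarLaplacian_mulVec_followers α Lf hone]; module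

/-- for the Laplacian of a graph expanded from a T-star graph
(vertex `1` joined to every other vertex with identical weight `α ≠ 0`, and the
follower block `L_f` having the all-ones vector as an eigenvector), the
controllable subspace of `(-L*, e₁)` has dimension exactly `2`. -/
theorem tstar_controllable_subspace_dim_two {m : ℕ} (hm : 2 ≤ m)
    (α μ : ℝ) (hα : α ≠ 0)
    (Lf : Matrix (Fin m) (Fin m) ℝ) (hLf : Lf.IsSymm)
    (hone : Lf.mulVec (fun _ => (1 : ℝ)) = μ • (fun _ => (1 : ℝ))) :
    letI L : Matrix (Unit ⊕ Fin m) (Unit ⊕ Fin m) ℝ :=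
      Matrix.fromBlocks (Matrix.of fun _ _ => α * m) (Matrix.of fun _ _ => α)
        (Matrix.of fun _ _ => α) Lf
    letI e₁ : Matrix (Unit ⊕ Fin m) (Fin 1) ℝ :=
      Matrix.of fun i _ => if i = Sum.inl () then 1 else 0
    (kalman' (-L) e₁).rank = 2 :=
  tstar_controllable_subspace_dim_two_general hm α μ hα Lf hone
end

section
/- Let L be a symmetric matrix with an orthonormal basis of eigenvectors. For single input b = e_i, the dimension of the controllable subspace of (-L, e_i) equals the number of eigenspaces of L not orthogonal to e_i; in particular, if L has a repeated eigenvalue with eigenspace of dimension k ≥ 2, the uncontrollable subspace with any single input has dimension at least k - 1. -/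
/-!
Write `b = ∑ ν, P ν b`, where `P ν` is the orthogonal projection onto the `ν`-eigenspace of `L`.
Then `(-L)^t b = ∑ ν, (-ν)^t • P ν b`, and Lagrange interpolation at the distinct numbers `-ν`
recovers each `P ν b` as a combination of these Krylov vectors. So the controllable subspace is
spanned by the nonzero `P ν b`, which are independent as eigenvectors for distinct eigenvalues.
For `b = e i`, `P ν (e i) ≠ 0` exactly when some `ν`-eigenvector `v` has
`v i = ⟪P ν (e i), v⟫ ≠ 0`. For the second claim, an eigenvalue whose eigenspace has dimension `k`
leaves room for at most `n - k + 1` distinct eigenvalues.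
-/

open Matrix

/-- The Kalman controllability matrix `[b, M b, M² b, …, M^{n-1} b]`. -/
def kalman {n m : ℕ} (M : Matrix (Fin n) (Fin n) ℝ) (B : Matrix (Fin n) (Fin m) ℝ) :
    Matrix (Fin n) (Fin n × Fin m) ℝ :=
  Matrix.of fun i p => (M ^ (p.1 : ℕ) * B) i p.2

open Polynomial Module Finset

section Krylov

variable {K V ι : Type*} [Field K] [AddCommGroup V] [Module K V]
  {f : Module.End K V} {c : ι → K} {w : ι → V} {s : Finset ι}

theorem aeval_apply_sum_of_eigenvectors (hw : ∀ i ∈ s, f (w i) = c i • w i) (p : K[X]) :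
    aeval f p (∑ i ∈ s, w i) = ∑ i ∈ s, p.eval (c i) • w i := by
  rw [map_sum]
  refine sum_congr rfl fun i hi => ?_
  by_cases h0 : w i = 0
  · simp [h0]
  · exact Module.End.aeval_apply_of_hasEigenvector
      ⟨Module.End.mem_eigenspace_iff.2 (hw i hi), h0⟩

theorem span_range_pow_apply_sum_of_eigenvectors {N : ℕ} (hw : ∀ i ∈ s, f (w i) = c i • w i)
    (hc : Set.InjOn c s) (hN : #s ≤ N) :
    Submodule.span K (Set.range fun t : Fin N => (f ^ (t : ℕ)) (∑ i ∈ s, w i)) =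
      Submodule.span K (w '' s) := by
  classical
  apply le_antisymm
  · rw [Submodule.span_le]
    rintro _ ⟨t, rfl⟩
    have h := aeval_apply_sum_of_eigenvectors hw (X ^ (t : ℕ))
    rw [map_pow, aeval_X] at h
    simp only [SetLike.mem_coe, h]
    exact Submodule.sum_mem _ fun i hi =>
      Submodule.smul_mem _ _ (Submodule.subset_span ⟨i, hi, rfl⟩)
  · rw [Submodule.span_le]
    rintro _ ⟨i, hi, rfl⟩
    have hdeg : (Lagrange.basis s c i).natDegree < N := by
      have := card_pos.2 ⟨i, hi⟩
      rw [Lagrange.natDegree_basis hc hi]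
      omega
    -- the Lagrange basis polynomial at `c i` filters out every component but `w i`
    have hpick : aeval f (Lagrange.basis s c i) (∑ j ∈ s, w j) = w i := by
      rw [aeval_apply_sum_of_eigenvectors hw, sum_eq_single_of_mem i hi,
        Lagrange.eval_basis_self hc hi, one_smul]
      intro j hj hji
      rw [Lagrange.eval_basis_of_ne hji.symm hj, zero_smul]
    rw [SetLike.mem_coe, ← hpick, aeval_eq_sum_range' hdeg, LinearMap.sum_apply]
    exact Submodule.sum_mem _ fun t ht => Submodule.smul_mem _ _
      (Submodule.subset_span ⟨⟨t, mem_range.1 ht⟩, rfl⟩)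

theorem finrank_span_image_of_eigenvectors [DecidablePred fun i => w i ≠ 0]
    (hw : ∀ i ∈ s, f (w i) = c i • w i) (hc : Set.InjOn c s) :
    finrank K (Submodule.span K (w '' s)) = #{i ∈ s | w i ≠ 0} := by
  have hspan : Submodule.span K (w '' s) =
      Submodule.span K (Set.range fun i : {i ∈ s | w i ≠ 0} => w i) := by
    rw [← Submodule.span_sdiff_singleton_zero]
    congr 1
    ext x
    simp only [Set.mem_sdiff, Set.mem_image, mem_coe, Set.mem_singleton_iff, Set.mem_range,
      Subtype.exists, mem_filter, exists_prop]
    aesop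
  have hli : LinearIndependent K fun i : {i ∈ s | w i ≠ 0} => w i := by
    refine f.eigenvectors_linearIndependent' (fun i : {i ∈ s | w i ≠ 0} => c i) ?_ _ fun i => ?_
    · exact fun i j h => Subtype.ext (hc (mem_filter.1 i.2).1 (mem_filter.1 j.2).1 h)
    · obtain ⟨hi, h0⟩ := mem_filter.1 i.2
      exact ⟨Module.End.mem_eigenspace_iff.2 (hw i hi), h0⟩
  rw [hspan, finrank_span_eq_card hli, Fintype.card_coe]

end Krylov

theorem Matrix.IsSymm.dotProduct_eq_zero_of_mulVec_eq_smul {R ι : Type*} [CommRing R]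
    [NoZeroDivisors R] [Fintype ι]
    {A : Matrix ι ι R} (hA : A.IsSymm) {μ ν : R} {u v : ι → R} (hu : A *ᵥ u = μ • u)
    (hv : A *ᵥ v = ν • v) (hμν : μ ≠ ν) : u ⬝ᵥ v = 0 := by
  have h : μ * (u ⬝ᵥ v) = ν * (u ⬝ᵥ v) := by
    calc μ * (u ⬝ᵥ v) = A *ᵥ u ⬝ᵥ v := by rw [hu, smul_dotProduct, smul_eq_mul]
      _ = u ⬝ᵥ A *ᵥ v := by rw [dotProduct_mulVec, ← mulVec_transpose, hA.eq]
      _ = ν * (u ⬝ᵥ v) := by rw [hv, dotProduct_smul, smul_eq_mul]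
  have h' : (μ - ν) * (u ⬝ᵥ v) = 0 := by rw [sub_mul, h, sub_self]
  exact (mul_eq_zero.1 h').resolve_left (sub_ne_zero.2 hμν)

namespace Matrix.IsHermitian

variable {ι : Type*} [Fintype ι] [DecidableEq ι] {A : Matrix ι ι ℝ} (hA : A.IsHermitian)

theorem sum_eigenvectorBasis_dotProduct_smul (x : ι → ℝ) :
    ∑ j, (⇑(hA.eigenvectorBasis j) ⬝ᵥ x) • ⇑(hA.eigenvectorBasis j) = x := by
  have h := congrArg WithLp.ofLp (hA.eigenvectorBasis.sum_repr' (WithLp.toLp 2 x))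
  simpa [EuclideanSpace.inner_eq_star_dotProduct, dotProduct_comm] using h

noncomputable def eigenspaceProj (ν : ℝ) (x : ι → ℝ) : ι → ℝ :=
  ∑ j with hA.eigenvalues j = ν, (⇑(hA.eigenvectorBasis j) ⬝ᵥ x) • ⇑(hA.eigenvectorBasis j)

theorem sum_eigenspaceProj (x : ι → ℝ) :
    ∑ ν ∈ univ.image hA.eigenvalues, hA.eigenspaceProj ν x = x := by
  exact (sum_fiberwise_of_maps_to (fun j _ => mem_image_of_mem hA.eigenvalues (mem_univ j))
    _).trans (hA.sum_eigenvectorBasis_dotProduct_smul x)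

theorem mulVec_eigenspaceProj (ν : ℝ) (x : ι → ℝ) :
    A *ᵥ hA.eigenspaceProj ν x = ν • hA.eigenspaceProj ν x := by
  simp only [eigenspaceProj, mulVec_sum, mulVec_smul, smul_sum]
  refine sum_congr rfl fun j hj => ?_
  rw [hA.mulVec_eigenvectorBasis, (mem_filter.1 hj).2, smul_comm]

theorem eigenspaceProj_dotProduct (ν : ℝ) (x y : ι → ℝ) :
    hA.eigenspaceProj ν x ⬝ᵥ y = x ⬝ᵥ hA.eigenspaceProj ν y := by
  simp only [eigenspaceProj, sum_dotProduct, dotProduct_sum, smul_dotProduct, dotProduct_smul,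
    smul_eq_mul]
  refine sum_congr rfl fun j _ => ?_
  rw [dotProduct_comm x]; ring

theorem eigenspaceProj_eq_self {ν : ℝ} {v : ι → ℝ} (hv : A *ᵥ v = ν • v) :
    hA.eigenspaceProj ν v = v := by
  conv_rhs => rw [← hA.sum_eigenvectorBasis_dotProduct_smul v]
  refine sum_subset (subset_univ _) fun j _ hj => ?_
  rw [(isHermitian_iff_isSymm.1 hA).dotProduct_eq_zero_of_mulVec_eq_smul
    (hA.mulVec_eigenvectorBasis j) hv fun h => hj (mem_filter.2 ⟨mem_univ j, h⟩), zero_smul]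

theorem eigenspaceProj_dotProduct_of_mulVec_eq_smul {ν : ℝ} {v : ι → ℝ} (hv : A *ᵥ v = ν • v)
    (x : ι → ℝ) : hA.eigenspaceProj ν x ⬝ᵥ v = x ⬝ᵥ v := by
  rw [eigenspaceProj_dotProduct, hA.eigenspaceProj_eq_self hv]

theorem eigenspaceProj_single_ne_zero_iff (ν : ℝ) (i : ι) :
    hA.eigenspaceProj ν (Pi.single i 1) ≠ 0 ↔ ∃ v : ι → ℝ, A *ᵥ v = ν • v ∧ v i ≠ 0 := by
  constructor
  · intro h
    refine ⟨_, hA.mulVec_eigenspaceProj ν (Pi.single i 1), ?_⟩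
    -- the `i`-th coordinate of the projection of `e i` is its squared norm
    rwa [← single_one_dotProduct i (hA.eigenspaceProj ν (Pi.single i 1)),
      ← hA.eigenspaceProj_dotProduct_of_mulVec_eq_smul (hA.mulVec_eigenspaceProj ν _), Ne,
      dotProduct_self_eq_zero]
  · rintro ⟨v, hv, hvi⟩ h
    apply hvi
    rw [← single_one_dotProduct i v, ← hA.eigenspaceProj_dotProduct_of_mulVec_eq_smul hv, h,
      zero_dotProduct]

theorem eigenspaceProj_eq_zero_of_notMem {ν : ℝ} (hν : ν ∉ univ.image hA.eigenvalues)
    (x : ι → ℝ) : hA.eigenspaceProj ν x = 0 := by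
  refine sum_eq_zero fun j hj => absurd ?_ hν
  exact mem_image.2 ⟨j, mem_univ j, (mem_filter.1 hj).2⟩

theorem setOf_exists_mulVec_eq_smul_apply_ne_zero (i : ι) :
    {ν : ℝ | ∃ v : ι → ℝ, A *ᵥ v = ν • v ∧ v i ≠ 0} =
      ↑{ν ∈ univ.image hA.eigenvalues | hA.eigenspaceProj ν (Pi.single i 1) ≠ 0} := by
  ext ν
  rw [coe_filter, Set.mem_ofPred_eq, Set.mem_ofPred_eq, ← hA.eigenspaceProj_single_ne_zero_iff,
    iff_and_self]
  exact fun h => by_contra fun hν => h (hA.eigenspaceProj_eq_zero_of_notMem hν _)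

theorem finrank_span_range_neg_pow_mulVec {N : ℕ} (hN : Fintype.card ι ≤ N) (b : ι → ℝ) :
    finrank ℝ (Submodule.span ℝ (Set.range fun t : Fin N => (-A) ^ (t : ℕ) *ᵥ b)) =
      #{ν ∈ univ.image hA.eigenvalues | hA.eigenspaceProj ν b ≠ 0} := by
  have hw : ∀ ν ∈ univ.image hA.eigenvalues,
      toLin' (-A) (hA.eigenspaceProj ν b) = -ν • hA.eigenspaceProj ν b := by
    intro ν _
    rw [toLin'_apply, neg_mulVec, mulVec_eigenspaceProj, neg_smul]
  have hc : Set.InjOn (Neg.neg : ℝ → ℝ) ↑(univ.image hA.eigenvalues) :=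
    neg_injective.injOn
  have hcard : #(univ.image hA.eigenvalues) ≤ N := card_image_le.trans hN
  have hpow : (fun t : Fin N => (-A) ^ (t : ℕ) *ᵥ b) =
      fun t : Fin N =>
        (toLin' (-A) ^ (t : ℕ)) (∑ ν ∈ univ.image hA.eigenvalues, hA.eigenspaceProj ν b) := by
    funext t
    rw [sum_eigenspaceProj, ← toLin'_pow, toLin'_apply]
  rw [hpow, span_range_pow_apply_sum_of_eigenvectors hw hc hcard,
    finrank_span_image_of_eigenvectors hw hc]

theorem finrank_ker_toLin'_sub_smul_le (ν : ℝ) :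
    finrank ℝ (LinearMap.ker (toLin' (A - ν • 1))) ≤ #{j | hA.eigenvalues j = ν} := by
  have hker : LinearMap.ker (toLin' (A - ν • 1)) ≤
      Submodule.span ℝ
        ↑(({j | hA.eigenvalues j = ν} : Finset ι).image fun j => ⇑(hA.eigenvectorBasis j)) := by
    intro v hv
    rw [LinearMap.mem_ker, toLin'_apply, sub_mulVec, smul_mulVec, one_mulVec, sub_eq_zero] at hv
    rw [← hA.eigenspaceProj_eq_self hv]
    exact Submodule.sum_mem _ fun j hj => Submodule.smul_mem _ _
      (Submodule.subset_span (mem_coe.2 (mem_image_of_mem _ hj)))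
  exact (Submodule.finrank_mono hker).trans ((finrank_span_finset_le_card _).trans card_image_le)

end Matrix.IsHermitian

theorem Finset.card_image_add_card_filter_eq_le {α β : Type*} [DecidableEq β] (s : Finset α)
    (f : α → β) (y : β) : #(s.image f) + #{x ∈ s | f x = y} ≤ #s + 1 := by
  have hsub : s.image f ⊆ insert y ({x ∈ s | ¬f x = y}.image f) := by
    intro z hz
    obtain ⟨x, hx, rfl⟩ := mem_image.1 hz
    by_cases hxy : f x = y
    · exact hxy ▸ mem_insert_self _ _
    · exact mem_insert_of_mem (mem_image_of_mem f (mem_filter.2 ⟨hx, hxy⟩))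
  have := s.card_filter_add_card_filter_not (fun x => f x = y)
  have := (card_le_card hsub).trans
    ((card_insert_le _ _).trans (Nat.add_le_add_right card_image_le 1))
  omega

theorem rank_kalman_eq_finrank_span {n : ℕ} (M : Matrix (Fin n) (Fin n) ℝ)
    (b : Matrix (Fin n) (Fin 1) ℝ) :
    (kalman M b).rank =
      finrank ℝ (Submodule.span ℝ (Set.range fun t : Fin n => M ^ (t : ℕ) *ᵥ b.col 0)) := by
  have hcol : (kalman M b).col = (fun t : Fin n => M ^ (t : ℕ) *ᵥ b.col 0) ∘ Prod.fst := by
    ext ⟨t, j⟩ r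
    rw [Subsingleton.elim j 0]
    rfl
  rw [rank_eq_finrank_span_cols, hcol, Prod.fst_surjective.range_comp]

/-- for symmetric `L` and single input `e i`, the dimension of
the controllable subspace of `(-L, e i)` equals the number of eigenspaces of
`L` not orthogonal to `e i`; in particular, if `L` has an eigenvalue whose
eigenspace has dimension `k ≥ 2`, then for any single input `b` the
uncontrollable subspace has dimension at least `k - 1`. -/
theorem controllable_dim_eq_card_eigenspaces {n : ℕ}
    (L : Matrix (Fin n) (Fin n) ℝ) (hL : L.IsSymm) :
    (∀ i : Fin n,
      (kalman (-L) (Matrix.of fun r (_ : Fin 1) => if r = i then (1:ℝ) else 0)).rank =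
        {μ : ℝ | ∃ v : Fin n → ℝ, L.mulVec v = μ • v ∧ v i ≠ 0}.ncard) ∧
    (∀ (μ : ℝ) (k : ℕ), 2 ≤ k →
      Module.finrank ℝ (LinearMap.ker (Matrix.toLin'
        (L - μ • (1 : Matrix (Fin n) (Fin n) ℝ)))) = k →
      ∀ b : Matrix (Fin n) (Fin 1) ℝ, (kalman (-L) b).rank ≤ n - (k - 1)) := by
  have hH : L.IsHermitian := isHermitian_iff_isSymm.2 hL
  have hn : Fintype.card (Fin n) ≤ n := (Fintype.card_fin n).le
  refine ⟨fun i => ?_, fun μ k hk hker b => ?_⟩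
  · have hsingle : (Matrix.of fun r (_ : Fin 1) => if r = i then (1:ℝ) else 0).col 0 =
        Pi.single i 1 := by
      ext r
      simp [Pi.single_apply]
    rw [rank_kalman_eq_finrank_span, hsingle, hH.finrank_span_range_neg_pow_mulVec hn,
      hH.setOf_exists_mulVec_eq_smul_apply_ne_zero, Set.ncard_coe_finset]
  · have hcard := card_image_add_card_filter_eq_le univ hH.eigenvalues μ
    have hmult := hker ▸ hH.finrank_ker_toLin'_sub_smul_le μ
    rw [card_univ, Fintype.card_fin] at hcard
    calc (kalman (-L) b).rank
        = #{ν ∈ univ.image hH.eigenvalues | hH.eigenspaceProj ν (b.col 0) ≠ 0} := by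
          rw [rank_kalman_eq_finrank_span, hH.finrank_span_range_neg_pow_mulVec hn]
      _ ≤ #(univ.image hH.eigenvalues) := card_filter_le _ _
      _ ≤ n - (k - 1) := by omega
end

section
/- (Lower bound on controllable subspace via distance) For a connected undirected weighted graph with Laplacian L and single input B = e_i, the dimension of the controllable subspace of (-L, e_i) is at least r + 1, where r = max_j d(i,j) is the graph eccentricity of vertex i. -/
open Matrix

lemma aux_rank_submatrix_le {m k p q : Type*} [Fintype m] [Fintype k] [Fintype p] [Fintype q]
    [DecidableEq m] [DecidableEq k] (A : Matrix m k ℝ)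
    (f : p → m) (g : q → k) : (A.submatrix f g).rank ≤ A.rank := by
  have h : A.submatrix f g =
      ((1 : Matrix m m ℝ).submatrix f id) *
        (A * ((1 : Matrix k k ℝ).submatrix id g)) := by
    ext a b
    simp [Matrix.mul_apply, Matrix.one_apply, Finset.sum_ite_eq, Finset.sum_ite_eq']
  rw [h]
  exact le_trans (Matrix.rank_mul_le_right _ _) (Matrix.rank_mul_le_left _ _)

lemma aux_neighbor {V : Type*} (G : SimpleGraph V) (hconn : G.Connected) (i j : V) (k : ℕ)
    (h : G.dist i j = k + 1) : ∃ l, G.Adj j l ∧ G.dist i l = k := by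
  obtain ⟨p, hp⟩ := (hconn i j).exists_walk_length_eq_dist
  have hq : p.reverse.length = k + 1 := by rw [SimpleGraph.Walk.length_reverse, hp, h]
  cases hq' : p.reverse with
  | nil => rw [hq'] at hq; simp at hq
  | cons hadj q =>
    rename_i l
    rw [hq'] at hq
    simp [SimpleGraph.Walk.length_cons] at hq
    refine ⟨l, hadj, ?_⟩
    have h1 : G.dist i l ≤ k := by
      have := G.dist_le q.reverse
      rwa [SimpleGraph.Walk.length_reverse, hq] at this
    have h2 : k ≤ G.dist i l := by
      have ht := hconn.dist_triangle (u := i) (v := l) (w := j)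
      have : G.dist l j = 1 := SimpleGraph.dist_eq_one_iff_adj.mpr hadj.symm
      omega
    omega


lemma aux_key {n : ℕ} (A : Matrix (Fin n) (Fin n) ℝ) (hsymm : A.IsSymm)
    (hnn : ∀ i j, 0 ≤ A i j) (hdiag : ∀ i, A i i = 0)
    (hconn : (SimpleGraph.fromRel (fun i j => A i j ≠ 0)).Connected)
    (i : Fin n) : ∀ k : ℕ, ∀ j : Fin n,
      (k < (SimpleGraph.fromRel (fun i j => A i j ≠ 0)).dist i j →
        ((-(Matrix.diagonal (fun k => ∑ l, A k l) - A)) ^ k) j i = 0) ∧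
      ((SimpleGraph.fromRel (fun i j => A i j ≠ 0)).dist i j = k →
        0 < ((-(Matrix.diagonal (fun k => ∑ l, A k l) - A)) ^ k) j i) := by
  set G := SimpleGraph.fromRel (fun i j => A i j ≠ 0) with hG
  set M := -(Matrix.diagonal (fun k => ∑ l, A k l) - A) with hM
  have hadjA : ∀ j l : Fin n, G.Adj j l → 0 < A j l := by
    intro j l h
    rw [hG, SimpleGraph.fromRel_adj] at h
    rcases h with ⟨hne, h | h⟩
    · exact lt_of_le_of_ne (hnn j l) (Ne.symm h)
    · rw [← hsymm.apply] at h
      exact lt_of_le_of_ne (hnn j l) (Ne.symm h)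
  have hAadj : ∀ j l : Fin n, A j l ≠ 0 → G.Adj j l := by
    intro j l h
    rw [hG, SimpleGraph.fromRel_adj]
    refine ⟨?_, Or.inl h⟩
    rintro rfl; exact h (hdiag j)
  have hMoff : ∀ j l : Fin n, j ≠ l → M j l = A j l := by
    intro j l h
    simp [hM, Matrix.diagonal_apply_ne _ h]
  intro k
  induction k with
  | zero =>
    intro j
    constructor
    · intro h
      have hne : j ≠ i := by
        intro h'; subst h'; simp [SimpleGraph.dist_self] at h
      simp [Matrix.one_apply_ne hne]
    · intro h
      have : i = j := (hconn.dist_eq_zero_iff).mp h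
      subst this; simp
  | succ k ih =>
    intro j
    have hrw : (M ^ (k + 1)) j i = ∑ l, M j l * (M ^ k) l i := by
      rw [pow_succ', Matrix.mul_apply]
    have hterm0 : ∀ l : Fin n, k < G.dist i l → M j l * (M ^ k) l i = 0 := by
      intro l hl; rw [(ih l).1 hl, mul_zero]
    constructor
    · intro h
      rw [hrw]
      apply Finset.sum_eq_zero
      intro l _
      by_cases hjl : j = l
      · subst hjl; exact hterm0 j (by omega)
      by_cases hA : A j l = 0
      · rw [hMoff j l hjl, hA, zero_mul]
      · have hadj : G.Adj l j := (hAadj j l hA).symm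
        have htri : G.dist i j ≤ G.dist i l + 1 := by
          have := hconn.dist_triangle (u := i) (v := l) (w := j)
          have h1 : G.dist l j = 1 := SimpleGraph.dist_eq_one_iff_adj.mpr hadj
          omega
        exact hterm0 l (by omega)
    · intro h
      rw [hrw]
      obtain ⟨l0, hl0adj, hl0dist⟩ := aux_neighbor G hconn i j k h
      have hnonneg : ∀ l ∈ Finset.univ, 0 ≤ M j l * (M ^ k) l i := by
        intro l _
        by_cases hjl : j = l
        · subst hjl; rw [(ih j).1 (by omega), mul_zero]
        by_cases hA : A j l = 0
        · rw [hMoff j l hjl, hA, zero_mul]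
        have hadj : G.Adj l j := (hAadj j l hA).symm
        have htri : G.dist i j ≤ G.dist i l + 1 := by
          have := hconn.dist_triangle (u := i) (v := l) (w := j)
          have h1 : G.dist l j = 1 := SimpleGraph.dist_eq_one_iff_adj.mpr hadj
          omega
        rcases lt_or_eq_of_le (show k ≤ G.dist i l by omega) with hlt | heq
        · rw [(ih l).1 hlt, mul_zero]
        · rw [hMoff j l hjl]
          exact le_of_lt (mul_pos (hadjA j l (hAadj j l hA)) ((ih l).2 heq.symm))
      apply Finset.sum_pos' hnonneg
      refine ⟨l0, Finset.mem_univ _, ?_⟩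
      have hjl0 : j ≠ l0 := by
        intro h'; subst h'; omega
      rw [hMoff j l0 hjl0]
      exact mul_pos (hadjA j l0 hl0adj) ((ih l0).2 hl0dist)

lemma aux_exists_at_dist {V : Type*} (G : SimpleGraph V) (hconn : G.Connected) (i : V) :
    ∀ k : ℕ, ∀ j : V, G.dist i j = k → ∀ m ≤ k, ∃ v, G.dist i v = m := by
  intro k
  induction k with
  | zero => intro j h m hm; exact ⟨j, by omega⟩
  | succ k ih =>
    intro j h m hm
    rcases Nat.lt_or_ge m (k + 1) with hlt | hge
    · obtain ⟨l, _, hl⟩ := aux_neighbor G hconn i j k h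
      exact ih l hl m (by omega)
    · exact ⟨j, by omega⟩

/-- for the Laplacian `L` of a connected graph with positive
weights and single input at vertex `i`, the dimension of the controllable
subspace of `(-L, e_i)` is at least `r + 1`, where `r` is the eccentricity
of `i` (i.e. it is at least `d(i,j) + 1` for every vertex `j`). -/
theorem controllable_dim_ge_eccentricity {n : ℕ}
    (A : Matrix (Fin n) (Fin n) ℝ) (hsymm : A.IsSymm)
    (hnn : ∀ i j, 0 ≤ A i j) (hdiag : ∀ i, A i i = 0)
    (hconn : (SimpleGraph.fromRel (fun i j => A i j ≠ 0)).Connected)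
    (i : Fin n) :
    ∀ j : Fin n,
      (SimpleGraph.fromRel (fun i j => A i j ≠ 0)).dist i j + 1 ≤
        (kalman (-(Matrix.diagonal (fun k => ∑ l, A k l) - A))
          (Matrix.of fun r (_ : Fin 1) => if r = i then (1:ℝ) else 0)).rank := by
  intro j
  set G := SimpleGraph.fromRel (fun i j => A i j ≠ 0) with hG
  set M := -(Matrix.diagonal (fun k => ∑ l, A k l) - A) with hM
  set B : Matrix (Fin n) (Fin 1) ℝ := Matrix.of fun r (_ : Fin 1) => if r = i then (1:ℝ) else 0 with hB
  have key := aux_key A hsymm hnn hdiag hconn i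
  set r := G.dist i j with hr
  -- choose vertices at each distance
  have hex : ∀ a : Fin (r + 1), ∃ v : Fin n, G.dist i v = (a : ℕ) :=
    fun a => aux_exists_at_dist G hconn i r j rfl a (by omega)
  choose v hv using hex
  have hvinj : Function.Injective v := by
    intro a b hab
    have : G.dist i (v a) = G.dist i (v b) := by rw [hab]
    rw [hv, hv] at this
    exact Fin.ext this
  have hcard : r + 1 ≤ n := by
    simpa using Fintype.card_le_of_injective v hvinj
  -- entries of the kalman matrix
  have hentry : ∀ (k : ℕ) (l : Fin n), (M ^ k * B) l 0 = (M ^ k) l i := by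
    intro k l
    rw [Matrix.mul_apply]
    simp [hB, Finset.sum_ite_eq']
  set T : Matrix (Fin (r + 1)) (Fin (r + 1)) ℝ :=
    (kalman M B).submatrix v (fun b => (⟨(b : ℕ), by omega⟩, 0)) with hT
  have hTval : ∀ a b : Fin (r + 1), T a b = (M ^ (b : ℕ)) (v a) i := by
    intro a b
    rw [hT]
    simp only [Matrix.submatrix_apply, kalman, Matrix.of_apply]
    exact hentry _ _
  have htri : T.BlockTriangular id := by
    intro a b hab
    rw [hTval]
    exact (key (b : ℕ) (v a)).1 (by rw [hv]; exact hab)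
  have hdiagpos : ∀ a : Fin (r + 1), 0 < T a a := by
    intro a
    rw [hTval]
    exact (key (a : ℕ) (v a)).2 (hv a)
  have hdet : T.det ≠ 0 := by
    rw [Matrix.det_of_upperTriangular htri]
    exact ne_of_gt (Finset.prod_pos fun a _ => hdiagpos a)
  have hrankT : T.rank = r + 1 := by
    rw [Matrix.rank_of_isUnit T ((Matrix.isUnit_iff_isUnit_det T).mpr (isUnit_iff_ne_zero.mpr hdet))]
    simp
  calc r + 1 = T.rank := hrankT.symm
    _ ≤ (kalman M B).rank := aux_rank_submatrix_le _ _ _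
end
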